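/- Let k ≥ 1 and let J be an ideal of ℂ[x,y] that is homogeneous with respect to the ℤ-grading with deg x = 1 and deg y = −1, such that x^k ∈ J and y^N ∈ J for some N ≥ 0. Then there exist natural numbers c_0 ≥ c_1 ≥ … ≥ c_{k−1} ≥ 0 such that J is the ideal generated by x^k together with the monomials x^e y^{c_e} for e = 0, 1, …, k−1. -/
import Mathlib


open MvPolynomial

/-- The weight function on `ℂ[x,y]` giving `x = X 0` weight `1` and `y = X 1`
weight `−1`. -/
def wt : Fin 2 → ℤ := ![1, -1]


noncomputable abbrev σσ (a b : ℕ) : Fin 2 →₀ ℕ := Finsupp.single 0 a + Finsupp.single 1 b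

lemma sigma_apply0 (a b : ℕ) : σσ a b 0 = a := by simp [σσ]
lemma sigma_apply1 (a b : ℕ) : σσ a b 1 = b := by simp [σσ]

lemma eq_sigma (μ : Fin 2 →₀ ℕ) : μ = σσ (μ 0) (μ 1) := by
  ext i; fin_cases i <;> simp [σσ, Finsupp.single_apply]

lemma weight_sigma (a b : ℕ) : (Finsupp.weight wt) (σσ a b) = (a : ℤ) - b := by
  rw [map_add]
  simp [Finsupp.weight, Finsupp.linearCombination, Finsupp.sum_single_index, wt]
  ring

lemma mon_eq (a b : ℕ) : ((X 0 : MvPolynomial (Fin 2) ℂ) ^ a * X 1 ^ b) = monomial (σσ a b) 1 := by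
  simp [X_pow_eq_monomial, monomial_mul]

lemma sigma_le (s t : ℕ) (μ : Fin 2 →₀ ℕ) : σσ s t ≤ μ ↔ s ≤ μ 0 ∧ t ≤ μ 1 := by
  rw [Finsupp.le_def]
  constructor
  · intro h; exact ⟨by simpa [σσ, Finsupp.single_apply] using h 0, by simpa [σσ, Finsupp.single_apply] using h 1⟩
  · rintro ⟨h0, h1⟩ i; fin_cases i <;> simp [σσ, Finsupp.single_apply, h0, h1]

lemma sigma_le' (s t x y : ℕ) : σσ s t ≤ σσ x y ↔ s ≤ x ∧ t ≤ y := by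
  rw [sigma_le, sigma_apply0, sigma_apply1]

lemma sigma_sub (a b s t : ℕ) (hs : s ≤ a) (ht : t ≤ b) : σσ a b - σσ s t = σσ (a - s) (b - t) := by
  ext i; fin_cases i <;> simp [σσ, Finsupp.single_apply, Finsupp.tsub_apply]

lemma mon_mem (k : ℕ) (I : Ideal (MvPolynomial (Fin 2) ℂ))
    (hx : (X 0 : MvPolynomial (Fin 2) ℂ) ^ k ∈ I) (μ : Fin 2 →₀ ℕ) (hμ : k ≤ μ 0)
    (c : ℂ) : (monomial μ c : MvPolynomial (Fin 2) ℂ) ∈ I := by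
  have key : Finsupp.single (0 : Fin 2) k + (μ - Finsupp.single 0 k) = μ := by
    refine DFunLike.ext _ _ fun i => ?_
    fin_cases i <;> simp [Finsupp.single_apply, Finsupp.tsub_apply] <;> omega
  have h : (monomial μ c : MvPolynomial (Fin 2) ℂ)
      = (X 0) ^ k * monomial (μ - Finsupp.single 0 k) c := by
    rw [X_pow_eq_monomial, monomial_mul, one_mul, key]
  rw [h]
  exact Ideal.mul_mem_right _ _ hx

lemma keyA (k : ℕ) (J : Ideal (MvPolynomial (Fin 2) ℂ))
    (hx : (X 0 : MvPolynomial (Fin 2) ℂ) ^ k ∈ J) :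
    ∀ (n a a0 b0 : ℕ) (g : MvPolynomial (Fin 2) ℂ), g ∈ J →
      IsWeightedHomogeneous wt g ((a0 : ℤ) - b0) → coeff (σσ a0 b0) g ≠ 0 →
      a0 < a → k ≤ a + n → (∀ μ ∈ g.support, μ ≠ σσ a0 b0 → a ≤ μ 0) →
      (monomial (σσ a0 b0) 1 : MvPolynomial (Fin 2) ℂ) ∈ J := by
  intro n
  induction n with
  | zero =>
    intro a a0 b0 g hgJ hhom h0 haa hka hsupp
    -- base case: all other monomials have x-exponent ≥ a ≥ k
    set c0 := coeff (σσ a0 b0) g with hc0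
    have hmem : σσ a0 b0 ∈ g.support := mem_support_iff.mpr h0
    have hrest : ∑ μ ∈ g.support.erase (σσ a0 b0), monomial μ (coeff μ g) ∈ J := by
      refine Ideal.sum_mem _ fun μ hμ => ?_
      have hμs := Finset.mem_of_mem_erase hμ
      have hne := Finset.ne_of_mem_erase hμ
      exact mon_mem k J hx μ (le_trans (by omega) (hsupp μ hμs hne)) _
    have hsum : (monomial (σσ a0 b0) c0 : MvPolynomial (Fin 2) ℂ)
        = g - ∑ μ ∈ g.support.erase (σσ a0 b0), monomial μ (coeff μ g) := by
      refine eq_sub_of_add_eq' ?_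
      conv_rhs => rw [as_sum g]
      exact Finset.sum_erase_add _ _ hmem
    have : (monomial (σσ a0 b0) c0 : MvPolynomial (Fin 2) ℂ) ∈ J := by
      rw [hsum]; exact Ideal.sub_mem _ hgJ hrest
    have := Ideal.mul_mem_left J (C c0⁻¹) this
    rwa [C_mul_monomial, inv_mul_cancel₀ h0] at this
  | succ n ih =>
    intro a a0 b0 g hgJ hhom h0 haa hka hsupp
    set c0 := coeff (σσ a0 b0) g with hc0
    set b1 := b0 + (a - a0) with hb1
    set c1 := coeff (σσ a b1) g with hc1
    -- The unique exponent with x-degree a compatible with homogeneity is σσ a b1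
    have hdeg : ∀ μ ∈ g.support, μ 0 = a → μ = σσ a b1 := by
      intro μ hμ hμ0
      have hw := hhom (mem_support_iff.mp hμ)
      rw [eq_sigma μ, weight_sigma] at hw
      rw [eq_sigma μ, hμ0]
      congr 1
      omega
    by_cases hczero : c1 = 0
    · -- no monomial at x-exponent a; increase a
      refine ih (a + 1) a0 b0 g hgJ hhom h0 (by omega) (by omega) ?_
      intro μ hμ hne
      have h1 := hsupp μ hμ hne
      rcases Nat.lt_or_ge a (μ 0) with h | h
      · omega
      · exfalso
        have heq : μ 0 = a := by omega
        have := hdeg μ hμ heq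
        rw [this] at hμ
        exact mem_support_iff.mp hμ hczero
    · -- cancel the monomial at x-exponent a
      set s := a - a0 with hs
      set t : MvPolynomial (Fin 2) ℂ := monomial (σσ s s) 1 with ht
      set g2 := g - (c1 / c0) • (t * g) with hg2
      have hg2J : g2 ∈ J := by
        refine Ideal.sub_mem _ hgJ ?_
        rw [smul_eq_C_mul]
        exact Ideal.mul_mem_left _ _ (Ideal.mul_mem_left _ _ hgJ)
      have hthom : IsWeightedHomogeneous wt t 0 :=
        isWeightedHomogeneous_monomial _ _ _ (by rw [weight_sigma]; ring)
      have hg2hom : IsWeightedHomogeneous wt g2 ((a0 : ℤ) - b0) := by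
        have hmul : IsWeightedHomogeneous wt (t * g) ((a0 : ℤ) - b0) := by
          have := hthom.mul hhom
          rwa [zero_add] at this
        have : g2 ∈ weightedHomogeneousSubmodule ℂ wt ((a0 : ℤ) - b0) :=
          Submodule.sub_mem _ hhom (Submodule.smul_mem _ _ hmul)
        exact this
      -- coefficient computations
      have hcoeff_tg : ∀ x y : ℕ, coeff (σσ x y) (t * g)
          = if s ≤ x ∧ s ≤ y then coeff (σσ (x - s) (y - s)) g else 0 := by
        intro x y
        rw [ht, coeff_monomial_mul']
        by_cases h : s ≤ x ∧ s ≤ y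
        · rw [if_pos ((sigma_le' s s x y).mpr h), if_pos h, one_mul,
            sigma_sub x y s s h.1 h.2]
        · rw [if_neg (fun hle => h ((sigma_le' s s x y).mp hle)), if_neg h]
      have hc0' : coeff (σσ a0 b0) g2 = c0 := by
        rw [hg2, coeff_sub, coeff_smul, hcoeff_tg]
        have hz : (if s ≤ a0 ∧ s ≤ b0 then coeff (σσ (a0 - s) (b0 - s)) g else 0) = (0 : ℂ) := by
          split_ifs with hcase
          · by_contra hne
            have hmem : σσ (a0 - s) (b0 - s) ∈ g.support := mem_support_iff.mpr hne
            have hne2 : σσ (a0 - s) (b0 - s) ≠ σσ a0 b0 := by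
              intro hEq
              have := congrArg (fun f => f 0) hEq
              simp only [sigma_apply0] at this
              omega
            have := hsupp _ hmem hne2
            rw [sigma_apply0] at this
            omega
          · rfl
        rw [hz, smul_zero, sub_zero]
      have hc1' : coeff (σσ a b1) g2 = 0 := by
        rw [hg2, coeff_sub, coeff_smul, hcoeff_tg]
        rw [if_pos ⟨by omega, by omega⟩]
        have hx' : a - s = a0 := by omega
        have hy' : b1 - s = b0 := by omega
        rw [hx', hy', ← hc0, ← hc1, smul_eq_mul, div_mul_cancel₀ _ (by rw [hc0]; exact h0),
          sub_self]
      have h02 : coeff (σσ a0 b0) g2 ≠ 0 := by rw [hc0']; exact h0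
      refine ih (a + 1) a0 b0 g2 hg2J hg2hom h02 (by omega) (by omega) ?_
      intro μ hμ hne
      have hcg2 : coeff μ g2 ≠ 0 := mem_support_iff.mp hμ
      -- μ cannot be σσ a b1
      have hμne1 : μ ≠ σσ a b1 := by
        intro hEq; rw [hEq] at hcg2; exact hcg2 hc1'
      have hor : coeff μ g ≠ 0 ∨ coeff μ (t * g) ≠ 0 := by
        by_contra hcon
        push_neg at hcon
        rw [hg2, coeff_sub, coeff_smul, hcon.1, hcon.2, smul_zero, sub_zero] at hcg2
        exact hcg2 rfl
      rcases hor with h | h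
      · have hμs : μ ∈ g.support := mem_support_iff.mpr h
        have := hsupp μ hμs hne
        rcases Nat.lt_or_ge a (μ 0) with h' | h'
        · omega
        · exfalso; exact hμne1 (hdeg μ hμs (by omega))
      · rw [ht, coeff_monomial_mul'] at h
        split_ifs at h with hle
        · rw [one_mul] at h
          have hν : μ - σσ s s ∈ g.support := mem_support_iff.mpr h
          rw [sigma_le] at hle
          have hν0 : (μ - σσ s s) 0 = μ 0 - s := by
            simp [σσ, Finsupp.tsub_apply, Finsupp.single_apply]
          by_cases hcase : μ - σσ s s = σσ a0 b0
          · exfalso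
            have hν1 : (μ - σσ s s) 1 = μ 1 - s := by
              simp [σσ, Finsupp.tsub_apply, Finsupp.single_apply]
            have e0 : μ 0 - s = a0 := by
              rw [← hν0, hcase, sigma_apply0]
            have e1 : μ 1 - s = b0 := by
              rw [← hν1, hcase, sigma_apply1]
            apply hμne1
            rw [eq_sigma μ]
            congr 1 <;> omega
          · have := hsupp _ hν hcase
            rw [hν0] at this
            omega
        · exact absurd rfl h

lemma keyB (k : ℕ) (J S : Ideal (MvPolynomial (Fin 2) ℂ))
    (hx : (X 0 : MvPolynomial (Fin 2) ℂ) ^ k ∈ J)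
    (hxS : (X 0 : MvPolynomial (Fin 2) ℂ) ^ k ∈ S)
    (hmon : ∀ a b : ℕ, a < k → (monomial (σσ a b) 1 : MvPolynomial (Fin 2) ℂ) ∈ J →
      (monomial (σσ a b) 1 : MvPolynomial (Fin 2) ℂ) ∈ S) :
    ∀ (n : ℕ) (g : MvPolynomial (Fin 2) ℂ), g.support.card ≤ n → g ∈ J →
      ∀ d : ℤ, IsWeightedHomogeneous wt g d → g ∈ S := by
  intro n
  induction n with
  | zero =>
    intro g hcard _ _ _
    have : g = 0 := by
      rwa [Nat.le_zero, Finset.card_eq_zero, support_eq_empty] at hcard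
    rw [this]; exact S.zero_mem
  | succ n ih =>
    intro g hcard hgJ d hhom
    by_cases hg0 : g = 0
    · rw [hg0]; exact S.zero_mem
    · have hne : g.support.Nonempty := by
        rw [Finset.nonempty_iff_ne_empty]
        intro h
        exact hg0 (support_eq_empty.mp h)
      obtain ⟨μ, hμ, hmin⟩ := g.support.exists_min_image (fun ν => ν 0) hne
      set a0 := μ 0 with ha0
      set b0 := μ 1 with hb0
      have hμeq : μ = σσ a0 b0 := eq_sigma μ
      have hd : d = (a0 : ℤ) - b0 := by
        have := hhom (mem_support_iff.mp hμ)
        rw [hμeq, weight_sigma] at this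
        omega
      by_cases hak : a0 < k
      · -- extract the lowest monomial
        have hm0 : (monomial (σσ a0 b0) 1 : MvPolynomial (Fin 2) ℂ) ∈ J := by
          refine keyA k J hx k (a0 + 1) a0 b0 g hgJ (hd ▸ hhom)
            (by rw [← hμeq]; exact mem_support_iff.mp hμ) (by omega) (by omega) ?_
          intro ν hν hνne
          have h1 := hmin ν hν
          rcases Nat.lt_or_ge a0 (ν 0) with h' | h'
          · omega
          · exfalso
            apply hνne
            have hν0 : ν 0 = a0 := by omega
            have := hhom (mem_support_iff.mp hν)
            rw [eq_sigma ν, weight_sigma] at this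
            rw [eq_sigma ν, hν0]
            congr 1
            omega
        have hm0S := hmon a0 b0 hak hm0
        set c0 := coeff (σσ a0 b0) g with hc0
        set g' := g - c0 • (monomial (σσ a0 b0) 1 : MvPolynomial (Fin 2) ℂ) with hg'
        have hg'J : g' ∈ J := by
          refine Ideal.sub_mem _ hgJ ?_
          rw [smul_eq_C_mul]
          exact Ideal.mul_mem_left _ _ hm0
        have hg'hom : IsWeightedHomogeneous wt g' d := by
          have hm0hom : IsWeightedHomogeneous wt
              (monomial (σσ a0 b0) (1 : ℂ)) d :=
            isWeightedHomogeneous_monomial _ _ _ (by rw [weight_sigma, hd])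
          have : g' ∈ weightedHomogeneousSubmodule ℂ wt d :=
            Submodule.sub_mem _ hhom (Submodule.smul_mem _ _ hm0hom)
          exact this
        have hsup : g'.support = g.support.erase (σσ a0 b0) := by
          ext ν
          rw [Finset.mem_erase, mem_support_iff, mem_support_iff, hg', coeff_sub,
            coeff_smul, coeff_monomial]
          by_cases hcase : σσ a0 b0 = ν
          · rw [if_pos hcase, ← hcase, smul_eq_mul, mul_one, ← hc0, sub_self]
            simp
          · rw [if_neg hcase, smul_zero, sub_zero]
            exact ⟨fun h => ⟨fun heq => hcase heq.symm, h⟩, fun h => h.2⟩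
        have hcard' : g'.support.card ≤ n := by
          rw [hsup, Finset.card_erase_of_mem (hμeq ▸ hμ)]
          omega
        have hg'S : g' ∈ S := ih g' hcard' hg'J d hg'hom
        have : g = g' + c0 • (monomial (σσ a0 b0) 1 : MvPolynomial (Fin 2) ℂ) := by
          rw [hg']; ring
        rw [this]
        refine S.add_mem hg'S ?_
        rw [smul_eq_C_mul]
        exact Ideal.mul_mem_left _ _ hm0S
      · -- all monomials divisible by x^k
        rw [as_sum g]
        refine Ideal.sum_mem _ fun ν hν => ?_
        refine mon_mem k S hxS ν ?_ _
        have := hmin ν hν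
        omega

/-- Let `k ≥ 1` and let `J` be an ideal of `ℂ[x,y]`, homogeneous for
the `ℤ`-grading with `deg x = 1`, `deg y = −1`, with `x^k ∈ J` and `y^N ∈ J` for some
`N ≥ 0`.  Then there are natural numbers `c_0 ≥ c_1 ≥ … ≥ c_{k−1} ≥ 0` with
`J = (x^k, x^e y^(c_e) : e = 0, …, k−1)`. -/
theorem homogeneous_cofinite_ideal_classification (k : ℕ) (hk : 1 ≤ k)
    (J : Ideal (MvPolynomial (Fin 2) ℂ))
    (hhom : ∀ f ∈ J, ∀ d : ℤ, weightedHomogeneousComponent wt d f ∈ J)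
    (hx : (X 0 : MvPolynomial (Fin 2) ℂ) ^ k ∈ J)
    (hy : ∃ N : ℕ, (X 1 : MvPolynomial (Fin 2) ℂ) ^ N ∈ J) :
    ∃ c : ℕ → ℕ, (∀ e f : ℕ, e ≤ f → f < k → c f ≤ c e) ∧
      J = Ideal.span ({(X 0 : MvPolynomial (Fin 2) ℂ) ^ k} ∪
        (fun e => (X 0 : MvPolynomial (Fin 2) ℂ) ^ e * X 1 ^ (c e)) '' {e : ℕ | e < k}) := by
  classical
  obtain ⟨N, hN⟩ := hy
  have hex : ∀ e : ℕ, ∃ n : ℕ, (monomial (σσ e n) 1 : MvPolynomial (Fin 2) ℂ) ∈ J := by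
    intro e
    refine ⟨N, ?_⟩
    rw [← mon_eq]
    exact Ideal.mul_mem_left _ _ hN
  set c : ℕ → ℕ := fun e => Nat.find (hex e) with hc
  have hcspec : ∀ e, (monomial (σσ e (c e)) 1 : MvPolynomial (Fin 2) ℂ) ∈ J := fun e =>
    Nat.find_spec (hex e)
  have hcmin : ∀ e n, (monomial (σσ e n) 1 : MvPolynomial (Fin 2) ℂ) ∈ J → c e ≤ n := fun e n h =>
    Nat.find_min' (hex e) h
  refine ⟨c, ?_, ?_⟩
  · intro e f hef _
    refine hcmin f (c e) ?_
    have : (monomial (σσ f (c e)) 1 : MvPolynomial (Fin 2) ℂ)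
        = X 0 ^ (f - e) * monomial (σσ e (c e)) 1 := by
      rw [← mon_eq, ← mon_eq, ← mul_assoc, ← pow_add]
      congr 2
      omega
    rw [this]
    exact Ideal.mul_mem_left _ _ (hcspec e)
  · set S := Ideal.span ({(X 0 : MvPolynomial (Fin 2) ℂ) ^ k} ∪
      (fun e => (X 0 : MvPolynomial (Fin 2) ℂ) ^ e * X 1 ^ (c e)) '' {e : ℕ | e < k}) with hS
    have hxS : (X 0 : MvPolynomial (Fin 2) ℂ) ^ k ∈ S :=
      Ideal.subset_span (Set.mem_union_left _ rfl)
    have hgenS : ∀ e, e < k → (monomial (σσ e (c e)) 1 : MvPolynomial (Fin 2) ℂ) ∈ S := by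
      intro e he
      rw [← mon_eq]
      exact Ideal.subset_span (Set.mem_union_right _ ⟨e, he, rfl⟩)
    apply le_antisymm
    · -- J ⊆ S
      intro f hf
      rw [← sum_weightedHomogeneousComponent wt f,
        finsum_eq_sum _ (weightedHomogeneousComponent_finsupp f)]
      refine Ideal.sum_mem _ fun d _ => ?_
      refine keyB k J S hx hxS ?_ _ _ le_rfl (hhom f hf d) d
        (weightedHomogeneousComponent_isWeightedHomogeneous d f)
      -- monomials of J with small x-exponent are in S
      intro a b hak hmem
      have hcb : c a ≤ b := hcmin a b hmem
      have : (monomial (σσ a b) 1 : MvPolynomial (Fin 2) ℂ)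
          = monomial (σσ a (c a)) 1 * X 1 ^ (b - c a) := by
        rw [← mon_eq, ← mon_eq, mul_assoc, ← pow_add]
        congr 2
        omega
      rw [this]
      exact Ideal.mul_mem_right _ _ (hgenS a hak)
    · -- S ⊆ J
      rw [hS]
      refine Ideal.span_le.mpr ?_
      rintro p (hp | ⟨e, he, rfl⟩)
      · rw [Set.mem_singleton_iff] at hp
        rw [hp]; exact hx
      · show X 0 ^ e * X 1 ^ c e ∈ J
        rw [mon_eq]
        exact hcspec e
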